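/- arXiv:1705.01062 — 4 statements merged into one kernel-verified Lean document; each statement's English description precedes it below -/
import Mathlib

section
/- Let G act by isometries on a metric space X, properly and cocompactly, and let h ∈ G with Min_{K'}(h) nonempty. Then for every K ≥ K' there exists a constant C > 0 such that Min_K(h) is contained in the C-neighbourhood of Min_{K'}(h). -/
/-!
Cover `X` by `D`-balls around an orbit `G • x₀`. If `x` is `D`-close to `g • x₀` and is moved at
most `K` by `h`, then `x₀` is moved at most `K + 2D` by the conjugate `g⁻¹ h g`. By properness only
finitely many such conjugates occur, and each has a point of `Min_{K'}` (a translate of a point of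
`Min_{K'}(h)`), so these points lie within a uniform distance `R` of `x₀`. Translating back by `g`
gives a point of `Min_{K'}(h)` within `D + R` of `x`.
-/

open Filter

section Displacement

variable {G X : Type*} [Group G] [PseudoMetricSpace X] [MulAction G X]

def displacementSet (h : G) (K : ℝ) : Set X := {x | dist x (h • x) ≤ K}

theorem mem_displacementSet {h : G} {K : ℝ} {x : X} :
    x ∈ displacementSet h K ↔ dist x (h • x) ≤ K :=
  Iff.rfl

theorem mem_displacementSet_of_dist_le [IsIsometricSMul G X] {h : G} {K D : ℝ} {x y : X}
    (hx : x ∈ displacementSet h K) (hxy : dist x y ≤ D) : y ∈ displacementSet h (K + 2 * D) :=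
  calc dist y (h • y)
      ≤ dist y x + dist x (h • x) + dist (h • x) (h • y) := dist_triangle4 _ _ _ _
    _ ≤ D + K + D := by
        rw [dist_smul, dist_comm y]
        gcongr
        exact hx
    _ = K + 2 * D := by ring

theorem smul_mem_displacementSet_iff [IsIsometricSMul G X] {h g : G} {K : ℝ} {x : X} :
    g • x ∈ displacementSet h K ↔ x ∈ displacementSet (g⁻¹ * h * g) K := by
  simp only [mem_displacementSet]
  rw [← dist_smul g⁻¹, inv_smul_smul, mul_smul, mul_smul]

theorem displacementSet_conj_nonempty [IsIsometricSMul G X] {h : G} {K : ℝ}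
    (hne : (displacementSet (X := X) h K).Nonempty) (g : G) :
    (displacementSet (X := X) (g⁻¹ * h * g) K).Nonempty := by
  obtain ⟨y, hy⟩ := hne
  exact ⟨g⁻¹ • y, smul_mem_displacementSet_iff.1 (by rwa [smul_inv_smul])⟩

end Displacement

theorem Set.Finite.exists_pos_forall_exists_mem_dist_le {ι X : Type*} [PseudoMetricSpace X]
    {F : Set ι} (hF : F.Finite) (S : ι → Set X) (hS : ∀ i ∈ F, (S i).Nonempty) (x₀ : X) :
    ∃ R > 0, ∀ i ∈ F, ∃ p ∈ S i, dist x₀ p ≤ R := by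
  have hev : ∀ᶠ R in atTop, ∀ i ∈ F, ∃ p ∈ S i, dist x₀ p ≤ R := by
    refine hF.eventually_all.2 fun i hi => ?_
    obtain ⟨p, hp⟩ := hS i hi
    filter_upwards [eventually_ge_atTop (dist x₀ p)] with R hR using ⟨p, hp, hR⟩
  exact ((eventually_gt_atTop 0).and hev).exists

/-- for a proper cocompact isometric action, every displacement set
`Min_K(h)` is contained in a `C`-neighbourhood of `Min_{K'}(h)` (when the latter is
nonempty and `K' ≤ K`). -/
theorem displacement_set_in_neighbourhood_of_smaller
    {G X : Type*} [Group G] [MetricSpace X] [MulAction G X]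
    (hiso : ∀ (g : G) (x y : X), dist (g • x) (g • y) = dist x y)
    (hproper : ∀ (x : X) (r : ℝ), {g : G | dist x (g • x) ≤ r}.Finite)
    (hcocompact : ∃ (x₀ : X) (D : ℝ), 0 < D ∧ ∀ x : X, ∃ g : G, dist x (g • x₀) ≤ D)
    (h : G) (K' : ℝ) (hne : ∃ x : X, dist x (h • x) ≤ K') :
    ∀ K : ℝ, K' ≤ K → ∃ C : ℝ, 0 < C ∧
      ∀ x : X, dist x (h • x) ≤ K →
        ∃ y : X, dist y (h • y) ≤ K' ∧ dist x y ≤ C := by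
  have : IsIsometricSMul G X := ⟨fun g => Isometry.of_dist_eq (hiso g)⟩
  obtain ⟨x₀, D, hD, hcover⟩ := hcocompact
  intro K _
  set F := {u : G | x₀ ∈ displacementSet u (K + 2 * D) ∧ ∃ g : G, g⁻¹ * h * g = u}
  have hF : F.Finite := (hproper x₀ (K + 2 * D)).subset fun u hu => hu.1
  obtain ⟨R, hR, hnear⟩ := hF.exists_pos_forall_exists_mem_dist_le (displacementSet · K')
    (fun u ⟨_, g, hg⟩ => hg ▸ displacementSet_conj_nonempty hne g) x₀
  refine ⟨D + R, by positivity, fun x hx => ?_⟩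
  obtain ⟨g, hxg⟩ := hcover x
  have hx₀ : x₀ ∈ displacementSet (g⁻¹ * h * g) (K + 2 * D) :=
    smul_mem_displacementSet_iff.1 (mem_displacementSet_of_dist_le hx hxg)
  obtain ⟨p, hp, hpR⟩ := hnear _ ⟨hx₀, g, rfl⟩
  refine ⟨g • p, smul_mem_displacementSet_iff.2 hp, ?_⟩
  calc dist x (g • p) ≤ dist x (g • x₀) + dist (g • x₀) (g • p) := dist_triangle _ _ _
    _ ≤ D + R := by rw [dist_smul]; gcongr
end

section
/- Let X be a metric space with a class of good geodesic rays satisfying the double-contracting property (asymptotic good rays η = (v_i), ξ = (w_i) satisfy d(v_i, w_i) ≤ d(v₀, w₀) + 2D + 1 for all i), and suppose X is almost extendable with constant E: for all vertices x, y there is a good geodesic ray from y passing within E of x. Let G act on X by isometries preserving good rays, and let h ∈ G act trivially on the boundary (i.e., for every good geodesic ray η, the rays η and h·η are uniformly bounded distance apart). Then there is a constant K (depending only on a chosen basepoint y, D, and E) such that d(x, h·x) ≤ K for all x ∈ X. -/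
/-- if `X` is almost extendable and `h` acts trivially on the boundary
(every good ray stays at bounded distance from its `h`-translate), then the
displacement function of `h` is globally bounded. -/
theorem trivial_boundary_action_bounded_displacement
    {G X : Type*} [Group G] [MetricSpace X] [MulAction G X]
    (hiso : ∀ (g : G) (x y : X), dist (g • x) (g • y) = dist x y)
    (GoodRay : (ℕ → X) → Prop) (D E : ℝ) (hD : 0 ≤ D) (hE : 0 ≤ E)
    (hGact : ∀ (g : G) (η : ℕ → X), GoodRay η → GoodRay (fun i => g • η i))
    (hdouble : ∀ η ξ : ℕ → X, GoodRay η → GoodRay ξ →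
      (∃ B : ℝ, ∀ i, dist (η i) (ξ i) ≤ B) →
      ∀ i, dist (η i) (ξ i) ≤ dist (η 0) (ξ 0) + 2 * D + 1)
    (hext : ∀ x y : X, ∃ η : ℕ → X, GoodRay η ∧ η 0 = y ∧ ∃ i, dist (η i) x ≤ E)
    (h : G)
    (htrivial : ∀ η : ℕ → X, GoodRay η → ∃ B : ℝ, ∀ i, dist (η i) (h • η i) ≤ B)
    (y : X) :
    ∃ K : ℝ, ∀ x : X, dist x (h • x) ≤ K := by
  refine ⟨E + (dist y (h • y) + 2 * D + 1) + E, fun x => ?_⟩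
  obtain ⟨η, hη, hη0, i, hi⟩ := hext x y
  have hξ := hGact h η hη
  have hb : ∀ j, dist (η j) ((fun i => h • η i) j) ≤
      dist (η 0) ((fun i => h • η i) 0) + 2 * D + 1 :=
    hdouble η _ hη hξ (htrivial η hη)
  have h1 : dist (η i) (h • η i) ≤ dist y (h • y) + 2 * D + 1 := by
    have := hb i; simpa [hη0] using this
  calc dist x (h • x) ≤ dist x (η i) + dist (η i) (h • x) := dist_triangle _ _ _
    _ ≤ dist x (η i) + (dist (η i) (h • η i) + dist (h • η i) (h • x)) := by
        gcongr; exact dist_triangle _ _ _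
    _ ≤ E + ((dist y (h • y) + 2 * D + 1) + E) := by
        gcongr
        · exact (dist_comm x (η i) ▸ hi)
        · rw [hiso]; exact (dist_comm (η i) x ▸ hi)
    _ = E + (dist y (h • y) + 2 * D + 1) + E := by ring
end

section
/- Let G be a torsion-free group that contains ℤ² as a finite-index subgroup and in which every nontrivial element is virtually central (its centraliser has finite index). Then G is isomorphic to ℤ². -/
/-!
`G` is finitely generated, being a finite extension of `ℤ²`, so its center is the intersection
of the centralizers of finitely many generators and has finite index `n`. The transfer
`G → Z(G)` is then `g ↦ gⁿ`: a homomorphism into an abelian group which is injective by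
torsion-freeness, so `G` is abelian. Now `g ↦ g^[G:H]` embeds `G` into `H ≅ ℤ²`, and `H`
embeds into `G`; hence `G` is a free abelian group whose rank is squeezed to `2`.
-/

open Subgroup

theorem Group.fg_of_finiteIndex {G : Type*} [Group G] (H : Subgroup G) [H.FiniteIndex] [FG H] :
    FG G := by
  have : Finite (G ⧸ H) := H.finite_quotient_of_finiteIndex
  let R : Subgroup G := closure (Set.range fun q : G ⧸ H => q.out)
  have hHR : H ⊔ R = ⊤ := by
    refine eq_top_iff.mpr fun g _ => ?_
    obtain ⟨h, hh⟩ := QuotientGroup.mk_out_eq_mul H g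
    have hg : g = (g : G ⧸ H).out * (h : G)⁻¹ := by rw [hh, mul_inv_cancel_right]
    have hout : (g : G ⧸ H).out ∈ R := subset_closure ⟨g, rfl⟩
    rw [hg]
    exact mul_mem (mem_sup_right hout) (mem_sup_left (inv_mem h.2))
  rw [fg_def, ← hHR]
  exact ((fg_iff_subgroup_fg H).mp ‹_›).sup ((fg_iff_subgroup_fg R).mp inferInstance)

theorem MonoidHom.injective_of_coe_apply_eq_pow {G : Type*} [Group G]
    (htf : ∀ g : G, g ≠ 1 → ∀ n : ℕ, 0 < n → g ^ n ≠ 1) {K : Subgroup G} (φ : G →* K)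
    {n : ℕ} (hn : n ≠ 0) (hφ : ∀ g, (φ g : G) = g ^ n) : Function.Injective φ := by
  refine (injective_iff_map_eq_one φ).mpr fun g hg => ?_
  by_contra hg1
  exact htf g hg1 n hn.bot_lt (by rw [← hφ, hg, K.coe_one])

theorem Subgroup.finiteIndex_center_of_fg {G : Type*} [Group G] [Group.FG G]
    (h : ∀ g : G, (centralizer {g}).FiniteIndex) : (center G).FiniteIndex := by
  obtain ⟨S, hS, hSfin⟩ := Group.fg_iff.mp ‹_›
  have : Finite S := hSfin
  rw [center_eq_infi' hS]
  exact finiteIndex_iInf fun g => h g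

theorem MonoidHom.transferCenterPow_injective {G : Type*} [Group G] [(center G).FiniteIndex]
    (htf : ∀ g : G, g ≠ 1 → ∀ n : ℕ, 0 < n → g ^ n ≠ 1) :
    Function.Injective (MonoidHom.transferCenterPow G) :=
  (transferCenterPow G).injective_of_coe_apply_eq_pow htf FiniteIndex.index_ne_zero
    transferCenterPow_apply

theorem mul_comm_of_finiteIndex_center {G : Type*} [Group G] [(center G).FiniteIndex]
    (htf : ∀ g : G, g ≠ 1 → ∀ n : ℕ, 0 < n → g ^ n ≠ 1) (a b : G) : a * b = b * a :=
  MonoidHom.transferCenterPow_injective htf <| by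
    rw [map_mul, map_mul]
    exact Subtype.ext <| mem_center_iff.mp (MonoidHom.transferCenterPow G b).2 _

theorem AddCommGroup.nonempty_addEquiv_of_injective {A M : Type*} [AddCommGroup A]
    [AddCommGroup M] [Module.Free ℤ M] [Module.Finite ℤ M] {f : A →+ M}
    (hf : Function.Injective f) {g : M →+ A} (hg : Function.Injective g) :
    Nonempty (A ≃+ M) := by
  have : Module.Finite ℤ A := Module.Finite.of_injective f.toIntLinearMap hf
  have : Module.IsTorsionFree ℤ A := hf.moduleIsTorsionFree _ (map_zsmul f)
  have hle : Module.finrank ℤ A ≤ Module.finrank ℤ M :=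
    LinearMap.finrank_le_finrank_of_injective (f := f.toIntLinearMap) hf
  have hge : Module.finrank ℤ M ≤ Module.finrank ℤ A :=
    LinearMap.finrank_le_finrank_of_injective (f := g.toIntLinearMap) hg
  exact (FiniteDimensional.nonempty_linearEquiv_of_finrank_eq (hle.antisymm hge)).map
    LinearEquiv.toAddEquiv

/-- a torsion-free group containing `ℤ²` with finite index, all of
whose nontrivial elements are virtually central, is isomorphic to `ℤ²`. -/
theorem virtually_Z2_all_virtually_central {G : Type*} [Group G]
    (htf : ∀ g : G, g ≠ 1 → ∀ n : ℕ, 0 < n → g ^ n ≠ 1)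
    (H : Subgroup G) (hH : H.FiniteIndex)
    (hiso : Nonempty (H ≃* Multiplicative (ℤ × ℤ)))
    (hvc : ∀ g : G, g ≠ 1 → (Subgroup.centralizer {g} : Subgroup G).FiniteIndex) :
    Nonempty (G ≃* Multiplicative (ℤ × ℤ)) := by
  obtain ⟨e⟩ := hiso
  have : Group.FG H := Group.fg_of_surjective (f := e.symm.toMonoidHom) e.symm.surjective
  have : Group.FG G := Group.fg_of_finiteIndex H
  have : (center G).FiniteIndex := finiteIndex_center_of_fg fun g => by
    by_cases hg : g = 1
    · rw [hg, centralizer_eq_top_iff_subset.mpr (Set.singleton_subset_iff.mpr (one_mem _))]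
      infer_instance
    · exact hvc g hg
  let _ : CommGroup G := { mul_comm := mul_comm_of_finiteIndex_center htf }
  obtain ⟨φ⟩ := AddCommGroup.nonempty_addEquiv_of_injective
    (f := MonoidHom.toAdditiveLeft (e.toMonoidHom.comp
      ((powMonoidHom H.index).codRestrict H H.pow_index_mem)))
    (e.injective.comp <| MonoidHom.injective_of_coe_apply_eq_pow htf _
      FiniteIndex.index_ne_zero fun _ => rfl)
    (g := MonoidHom.toAdditiveRight (H.subtype.comp e.symm.toMonoidHom))
    (H.subtype_injective.comp e.symm.injective)
  exact ⟨MulEquiv.toAdditiveLeft.symm φ⟩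
end

section
/- Let G be a group acting geometrically on a metric space X such that for some point O the orbit map is a quasi-isometry, and let h ∈ G be an infinite-order element whose centraliser C_G(h) contains a finite-index subgroup isomorphic to F_n × ℤ (free group times ℤ) with ⟨h⟩ commensurable to the ℤ factor. If every element of G is virtually central (centraliser of finite index) and G is torsion-free, then G is isomorphic to ℤ or ℤ². -/
/-!
Since `Fₙ × ℤ` is finitely generated and has finite index in `C_G(h)`, which has finite index in
`G`, the group `G` is finitely generated; intersecting the centralisers of finitely many
generators shows that the centre `Z(G)` has finite index. The transfer `g ↦ g ^ [G : Z(G)]` is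
then a homomorphism to an abelian group, so every commutator is torsion and hence trivial: `G` is
abelian. In particular `Fₙ` is abelian, so `n ≤ 1`, and `g ↦ g ^ [G : K]` embeds `G` into
`K ≅ Fₙ × ℤ ↪ ℤ²`. A nontrivial finitely generated torsion-free abelian group of rank at most `2`
is `ℤ` or `ℤ²`.
-/

open Subgroup
open scoped commutatorElement

namespace Subgroup

variable {G : Type*} [Group G]

theorem finiteIndex_of_subgroupOf {H K : Subgroup G} (hle : H ≤ K)
    [(H.subgroupOf K).FiniteIndex] [K.FiniteIndex] : H.FiniteIndex :=
  ⟨relIndex_mul_index hle ▸ mul_ne_zero FiniteIndex.index_ne_zero FiniteIndex.index_ne_zero⟩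

theorem _root_.Group.fg_of_finiteIndex_s8 (K : Subgroup G) [K.FiniteIndex] [Group.FG K] :
    Group.FG G := by
  obtain ⟨S, hS⟩ := (Group.fg_iff_subgroup_fg K).mp ‹_›
  let T := Set.range fun q : G ⧸ K => q.out
  have hT : T.Finite := Set.finite_range _
  refine Group.fg_iff.mpr ⟨S ∪ T, eq_top_iff.mpr fun g _ => ?_, S.finite_toSet.union hT⟩
  have hK : K ≤ closure (S ∪ T) := hS ▸ closure_mono Set.subset_union_left
  obtain ⟨k, hk⟩ := QuotientGroup.mk_out_eq_mul K g
  have hout : (g : G ⧸ K).out ∈ closure (S ∪ T) := subset_closure (Or.inr ⟨_, rfl⟩)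
  simpa [hk] using mul_mem hout (hK (inv_mem k.2))

theorem finiteIndex_center_of_forall_finiteIndex_centralizer [Group.FG G]
    (h : ∀ g : G, (centralizer {g}).FiniteIndex) : (center G).FiniteIndex := by
  obtain ⟨S, hS⟩ := Group.fg_def.mp ‹_›
  rw [center_eq_infi' hS]
  exact finiteIndex_iInf fun g => h g

theorem mul_comm_of_finiteIndex_center [(center G).FiniteIndex]
    (htf : ∀ g : G, IsOfFinOrder g → g = 1) (a b : G) : a * b = b * a := by
  have hcenter : ⁅MonoidHom.transferCenterPow G a, MonoidHom.transferCenterPow G b⁆ = 1 :=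
    commutatorElement_eq_one_iff_mul_comm.mpr (Subtype.ext (mem_center_iff.mp (Subtype.prop _) _))
  have hpow : ⁅a, b⁆ ^ (center G).index = 1 := by
    rw [← MonoidHom.transferCenterPow_apply, map_commutatorElement, hcenter, OneMemClass.coe_one]
  refine commutatorElement_eq_one_iff_mul_comm.mp (htf _ ?_)
  exact isOfFinOrder_iff_pow_eq_one.mpr ⟨_, Nat.pos_of_ne_zero FiniteIndex.index_ne_zero, hpow⟩

end Subgroup

namespace FreeGroup

variable {α : Type*}

theorem subsingleton_of_mul_comm (h : ∀ x y : FreeGroup α, x * y = y * x) : Subsingleton α := by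
  classical
  refine ⟨fun a b => by_contra fun hab => ?_⟩
  let σ : α → Equiv.Perm (Fin 3) := fun x => if x = a then Equiv.swap 0 1 else Equiv.swap 1 2
  have hσ := congrArg (lift σ) (h (of a) (of b))
  simp only [_root_.map_mul, lift_apply_of, σ, ↓reduceIte, Ne.symm hab] at hσ
  exact absurd hσ (by decide)

theorem exists_injective_toInt [Subsingleton α] :
    ∃ f : FreeGroup α →* Multiplicative ℤ, Function.Injective f := by
  cases isEmpty_or_nonempty α
  · exact ⟨1, Function.injective_of_subsingleton _⟩
  · have := uniqueOfSubsingleton (Classical.arbitrary α)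
    exact ⟨mulEquivIntOfUnique.toMonoidHom, mulEquivIntOfUnique.injective⟩

end FreeGroup

namespace Subgroup

variable {G : Type*} [CommGroup G]

noncomputable def powIndexHom (K : Subgroup G) : G →* K :=
  (powMonoidHom K.index).codRestrict K K.pow_index_mem

theorem powIndexHom_injective [IsMulTorsionFree G] (K : Subgroup G) [K.FiniteIndex] :
    Function.Injective K.powIndexHom := fun _ _ hab =>
  IsMulTorsionFree.pow_left_injective FiniteIndex.index_ne_zero (congrArg Subtype.val hab)

end Subgroup

theorem CommGroup.nonempty_mulEquiv_int_or_int_prod_int {G : Type*} [CommGroup G] [Group.FG G]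
    [IsMulTorsionFree G] [Nontrivial G] {f : G →* Multiplicative (ℤ × ℤ)}
    (hf : Function.Injective f) :
    Nonempty (G ≃* Multiplicative ℤ) ∨ Nonempty (G ≃* Multiplicative (ℤ × ℤ)) := by
  have : Module.Finite ℤ (Additive G) := Module.Finite.iff_addGroup_fg.mpr inferInstance
  have hle : Module.finrank ℤ (Additive G) ≤ 2 := by
    simpa using LinearMap.finrank_le_finrank_of_injective
      (f := (MonoidHom.toAdditiveLeft f).toIntLinearMap) hf
  have hpos : 0 < Module.finrank ℤ (Additive G) := Module.finrank_pos
  obtain hr | hr : Module.finrank ℤ (Additive G) = 1 ∨ Module.finrank ℤ (Additive G) = 2 := by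
    omega
  · exact .inl ⟨AddEquiv.toMultiplicativeRight ((Module.finBasisOfFinrankEq ℤ _ hr).equivFun.trans
      (LinearEquiv.funUnique (Fin 1) ℤ ℤ)).toAddEquiv⟩
  · exact .inr ⟨AddEquiv.toMultiplicativeRight ((Module.finBasisOfFinrankEq ℤ _ hr).equivFun.trans
      (LinearEquiv.finTwoArrow ℤ ℤ)).toAddEquiv⟩

theorem virtually_central_systolic_classification_general
    {G : Type*} [Group G]
    (h : G) (hinf : ∀ n : ℕ, 0 < n → h ^ n ≠ 1)
    (n : ℕ) (K : Subgroup G) (hKle : K ≤ Subgroup.centralizer {h})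
    (hKfi : (K.subgroupOf (Subgroup.centralizer {h})).FiniteIndex)
    (φ : K ≃* FreeGroup (Fin n) × Multiplicative ℤ)
    (htf : ∀ g : G, g ≠ 1 → ∀ k : ℕ, 0 < k → g ^ k ≠ 1)
    (hvc : ∀ g : G, (Subgroup.centralizer {g} : Subgroup G).FiniteIndex) :
    Nonempty (G ≃* Multiplicative ℤ) ∨ Nonempty (G ≃* Multiplicative (ℤ × ℤ)) := by
  have : Nontrivial G := ⟨⟨h, 1, by simpa using hinf 1 one_pos⟩⟩
  have hfinOrder (g : G) (hg : IsOfFinOrder g) : g = 1 := by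
    obtain ⟨k, hk, hgk⟩ := isOfFinOrder_iff_pow_eq_one.mp hg
    exact by_contra fun hg1 => htf g hg1 k hk hgk
  have := hvc h
  have : K.FiniteIndex := finiteIndex_of_subgroupOf hKle
  have : Group.FG K := Group.fg_of_surjective (f := φ.symm.toMonoidHom) φ.symm.surjective
  have : Group.FG G := Group.fg_of_finiteIndex_s8 K
  have := finiteIndex_center_of_forall_finiteIndex_centralizer hvc
  have hcomm := mul_comm_of_finiteIndex_center hfinOrder
  let _ : CommGroup G := { mul_comm := hcomm }
  have : IsMulTorsionFree G := .of_not_isOfFinOrder fun g hg1 hg => hg1 (hfinOrder g hg)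
  have hFcomm (x y : FreeGroup (Fin n)) : x * y = y * x := by
    simpa using congrArg (fun k => (φ k).1) (Subtype.ext (hcomm (φ.symm (x, 1)) (φ.symm (y, 1))) :
      φ.symm (x, 1) * φ.symm (y, 1) = φ.symm (y, 1) * φ.symm (x, 1))
  have := FreeGroup.subsingleton_of_mul_comm hFcomm
  obtain ⟨e, he⟩ := FreeGroup.exists_injective_toInt (α := Fin n)
  exact CommGroup.nonempty_mulEquiv_int_or_int_prod_int
    (f := (MulEquiv.prodMultiplicative ℤ ℤ).symm.toMonoidHom.comp
      ((e.prodMap (MonoidHom.id _)).comp (φ.toMonoidHom.comp K.powIndexHom)))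
    ((MulEquiv.prodMultiplicative ℤ ℤ).symm.injective.comp
      ((he.prodMap Function.injective_id).comp (φ.injective.comp K.powIndexHom_injective)))

/-- if `G` acts geometrically on `X`, `h ∈ G` has infinite order with
centraliser containing a finite-index subgroup isomorphic to `Fₙ × ℤ` whose `ℤ`
factor is commensurable with `⟨h⟩`, `G` is torsion-free and every element of `G`
is virtually central, then `G ≅ ℤ` or `G ≅ ℤ²`. -/
theorem virtually_central_systolic_classification
    {G X : Type*} [Group G] [MetricSpace X] [MulAction G X]
    (hiso : ∀ (g : G) (x y : X), dist (g • x) (g • y) = dist x y)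
    (hproper : ∀ (x : X) (r : ℝ), {g : G | dist x (g • x) ≤ r}.Finite)
    (hcocompact : ∃ (O : X) (R : ℝ), 0 < R ∧ ∀ x : X, ∃ g : G, dist x (g • O) ≤ R)
    (h : G) (hinf : ∀ n : ℕ, 0 < n → h ^ n ≠ 1)
    (n : ℕ) (K : Subgroup G) (hKle : K ≤ Subgroup.centralizer {h})
    (hKfi : (K.subgroupOf (Subgroup.centralizer {h})).FiniteIndex)
    (φ : K ≃* FreeGroup (Fin n) × Multiplicative ℤ)
    (hcomm : Subgroup.Commensurable (Subgroup.zpowers h)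
      (Subgroup.map K.subtype (Subgroup.map φ.symm.toMonoidHom
        ((⊥ : Subgroup (FreeGroup (Fin n))).prod (⊤ : Subgroup (Multiplicative ℤ))))))
    (htf : ∀ g : G, g ≠ 1 → ∀ k : ℕ, 0 < k → g ^ k ≠ 1)
    (hvc : ∀ g : G, (Subgroup.centralizer {g} : Subgroup G).FiniteIndex) :
    Nonempty (G ≃* Multiplicative ℤ) ∨ Nonempty (G ≃* Multiplicative (ℤ × ℤ)) :=
  virtually_central_systolic_classification_general h hinf n K hKle hKfi φ htf hvc
end
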